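/- arXiv:1403.6234 — 3 statements merged into one kernel-verified Lean document; each statement's English description precedes it below -/
import Mathlib

section
/- Let M, N, V be positive real constants and let Λ be a real constant with Λ ≥ M/V. Suppose H : [0,∞) → ℝ is differentiable, satisfies H'(t) ≤ -H(t)²/(M·N) - M²/V + Λ·M for all t ≥ 0, and has initial value H(0) < -√(Λ·M²·N - M³·N/V). Then no such H exists on all of [0,∞); that is, the solution of the differential inequality blows up at a finite time T. -/
/-- Theorem 1, case (2) (analytic core): if `Λ ≥ M / V` with `M, N, V > 0`, then no
differentiable function `H : [0,∞) → ℝ` can satisfy the Riccati differential inequality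
`H'(t) ≤ -H(t)² / (M*N) - M² / V + Λ*M` for all `t ≥ 0` together with the initial
condition `H(0) < -√(Λ·M²·N - M³·N/V)`; such a solution blows up in finite time. -/
theorem no_global_solution_riccati_lambda_ge
    (M N V Λ : ℝ) (hM : 0 < M) (hN : 0 < N) (hV : 0 < V) (hΛ : M / V ≤ Λ) :
    ¬ ∃ H H' : ℝ → ℝ,
      (∀ t : ℝ, 0 ≤ t → HasDerivWithinAt H (H' t) (Set.Ici 0) t) ∧
      (∀ t : ℝ, 0 ≤ t → H' t ≤ -(H t) ^ 2 / (M * N) - M ^ 2 / V + Λ * M) ∧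
      H 0 < -Real.sqrt (Λ * M ^ 2 * N - M ^ 3 * N / V) := by
  rintro ⟨H, H', h1, h2, h0⟩
  set a : ℝ := Real.sqrt (Λ * M ^ 2 * N - M ^ 3 * N / V) with ha
  have hMN : (0 : ℝ) < M * N := mul_pos hM hN
  have harg : 0 ≤ Λ * M ^ 2 * N - M ^ 3 * N / V := by
    have h1 : M / V ≤ Λ := hΛ
    have h2 : 0 < M ^ 2 * N := by positivity
    have : M ^ 3 * N / V = (M / V) * (M ^ 2 * N) := by ring
    rw [this]
    nlinarith [mul_le_mul_of_nonneg_right h1 h2.le]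
  have ha0 : 0 ≤ a := Real.sqrt_nonneg _
  have ha2 : a ^ 2 = Λ * M ^ 2 * N - M ^ 3 * N / V := Real.sq_sqrt harg
  have hH0neg : H 0 < 0 := lt_of_lt_of_le h0 (by linarith)
  have hsq : a ^ 2 < (H 0) ^ 2 := by nlinarith
  -- continuity of H on [0, ∞)
  have hcont : ContinuousOn H (Set.Ici 0) := fun t ht =>
    (h1 t ht).continuousWithinAt
  have hderiv : ∀ x : ℝ, 0 ≤ x → HasDerivWithinAt H (H' x) (Set.Ici x) x := fun x hx =>
    (h1 x hx).mono (Set.Ici_subset_Ici.2 hx)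
  -- Step 1 : H t ≤ H 0 for all t ≥ 0
  have step1 : ∀ t : ℝ, 0 ≤ t → H t ≤ H 0 := by
    intro t ht
    have := image_le_of_deriv_right_lt_deriv_boundary
      (f := H) (f' := H') (a := 0) (b := t)
      (hcont.mono (Set.Icc_subset_Ici_self))
      (fun x hx => hderiv x hx.1)
      (B := fun _ => H 0) (B' := fun _ => 0)
      le_rfl (fun x => hasDerivAt_const x (H 0))
      (fun x hx hxH => by
        show H' x < 0
        have h2x := h2 x hx.1
        rw [hxH] at h2x
        have : -(H 0) ^ 2 / (M * N) - M ^ 2 / V + Λ * M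
            = -((H 0) ^ 2 - a ^ 2) / (M * N) := by
          rw [ha2]; field_simp; ring
        rw [this, neg_div] at h2x
        have hpos : 0 < ((H 0) ^ 2 - a ^ 2) / (M * N) := by
          apply div_pos (by linarith) hMN
        linarith)
    exact this (Set.mem_Icc.2 ⟨ht, le_refl t⟩)
  have hHneg : ∀ t : ℝ, 0 ≤ t → H t < 0 := fun t ht =>
    lt_of_le_of_lt (step1 t ht) hH0neg
  -- the constant k
  set k : ℝ := ((H 0) ^ 2 - a ^ 2) / ((H 0) ^ 2 * (M * N)) with hk
  have hH0sq : 0 < (H 0) ^ 2 := pow_two_pos_of_ne_zero hH0neg.ne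
  have hkpos : 0 < k := div_pos (by linarith) (by positivity)
  -- Step: H' t ≤ -k * (H t)^2
  have step2 : ∀ t : ℝ, 0 ≤ t → H' t ≤ -k * (H t) ^ 2 := by
    intro t ht
    have h2t := h2 t ht
    have heq : -(H t) ^ 2 / (M * N) - M ^ 2 / V + Λ * M
        = -((H t) ^ 2 - a ^ 2) / (M * N) := by
      rw [ha2]; field_simp; ring
    rw [heq] at h2t
    have hsq' : (H 0) ^ 2 ≤ (H t) ^ 2 := by
      nlinarith [step1 t ht, hHneg t ht]
    have key : k * (H t) ^ 2 ≤ ((H t) ^ 2 - a ^ 2) / (M * N) := by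
      rw [hk, div_mul_eq_mul_div, div_le_div_iff₀ (by positivity) hMN]
      nlinarith [mul_nonneg (mul_nonneg hMN.le (sq_nonneg a)) (sub_nonneg.2 hsq')]
    rw [neg_div] at h2t
    linarith
  -- Step 3: fencing for G t = -(H t)⁻¹
  have step3 : ∀ t : ℝ, 0 ≤ t → -(H t)⁻¹ ≤ -(H 0)⁻¹ + -k * t := by
    intro t ht
    have hGcont : ContinuousOn (fun s => -(H s)⁻¹) (Set.Icc 0 t) := by
      apply ContinuousOn.neg
      exact ContinuousOn.inv₀ (hcont.mono Set.Icc_subset_Ici_self)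
        (fun s hs => (hHneg s hs.1).ne)
    have := image_le_of_deriv_right_le_deriv_boundary
      (f := fun s => -(H s)⁻¹) (f' := fun s => H' s / (H s) ^ 2)
      (a := 0) (b := t) hGcont
      (fun x hx => by
        have hx0 : (0:ℝ) ≤ x := hx.1
        have hne : H x ≠ 0 := (hHneg x hx0).ne
        have := ((hderiv x hx0).inv hne).neg
        refine this.congr_deriv ?_
        ring)
      (B := fun s => -(H 0)⁻¹ + -k * s) (B' := fun _ => -k)
      (by simp)
      (Continuous.continuousOn (continuous_const.add (continuous_const.mul continuous_id)))
      (fun x _ => ((hasDerivAt_const x (-(H 0)⁻¹)).add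
        ((hasDerivAt_id x).const_mul (-k))).hasDerivWithinAt.congr_deriv (by ring))
      (fun x hx => by
        have hx0 : (0:ℝ) ≤ x := hx.1
        have hsq2 : 0 < (H x) ^ 2 := pow_two_pos_of_ne_zero (hHneg x hx0).ne
        show H' x / (H x) ^ 2 ≤ -k
        rw [div_le_iff₀ hsq2]
        have := step2 x hx0
        linarith)
    exact this (Set.mem_Icc.2 ⟨ht, le_refl t⟩)
  -- conclusion: contradiction at large t
  set T : ℝ := (-(H 0)⁻¹) / k + 1 with hT
  have hG0 : 0 < -(H 0)⁻¹ := by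
    have : (H 0)⁻¹ < 0 := inv_lt_zero.2 hH0neg
    linarith
  have hTpos : 0 < T := by
    have := div_pos hG0 hkpos
    rw [hT]; linarith
  have h3 := step3 T hTpos.le
  have hGT : 0 < -(H T)⁻¹ := by
    have : (H T)⁻¹ < 0 := inv_lt_zero.2 (hHneg T hTpos.le)
    linarith
  have h0ne : H 0 ≠ 0 := hH0neg.ne
  have hkne : k ≠ 0 := hkpos.ne'
  have heqT : -(H 0)⁻¹ + -k * T = -k := by
    rw [hT]; field_simp; ring
  rw [heqT] at h3
  linarith
end

section
/- Let α, β > 0 be real constants and let 0 < T ≤ ∞. If H : [0,T) → ℝ is differentiable and satisfies H'(t) ≤ -α·H(t)² - β for all t ∈ [0,T), then T is finite and T ≤ max(H(0), 0)/β + π/√(α·β). -/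
/-- Quantitative Riccati blowup: if `α, β > 0`, `0 < T ≤ ∞` (as an extended real), and
`H : [0,T) → ℝ` is differentiable with `H'(t) ≤ -α·H(t)² - β` on `[0,T)`, then `T` is
finite and `T ≤ max(H(0), 0)/β + π/√(α·β)`. -/
theorem riccati_blowup_time_bound
    (α β : ℝ) (hα : 0 < α) (hβ : 0 < β) (T : EReal) (hT : 0 < T)
    (H H' : ℝ → ℝ)
    (hderiv : ∀ t : ℝ, 0 ≤ t → (t : EReal) < T →
        HasDerivWithinAt H (H' t) {s : ℝ | 0 ≤ s ∧ (s : EReal) < T} t)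
    (hineq : ∀ t : ℝ, 0 ≤ t → (t : EReal) < T → H' t ≤ -α * (H t) ^ 2 - β) :
    T ≠ ⊤ ∧ T ≤ ((max (H 0) 0 / β + Real.pi / Real.sqrt (α * β) : ℝ) : EReal) := by
  set k : ℝ := Real.sqrt (α * β) with hk_def
  set r : ℝ := Real.sqrt (α / β) with hr_def
  have hk : 0 < k := Real.sqrt_pos.mpr (mul_pos hα hβ)
  have hr : 0 < r := Real.sqrt_pos.mpr (div_pos hα hβ)
  have hrβ : r * β = k := by
    have h1 : r * β = Real.sqrt (α / β * β ^ 2) := by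
      rw [Real.sqrt_mul (div_nonneg hα.le hβ.le), Real.sqrt_sq hβ.le]
    rw [h1, hk_def]
    congr 1
    field_simp
  have hr2 : r ^ 2 * β = α := by
    rw [hr_def, Real.sq_sqrt (div_nonneg hα.le hβ.le)]
    field_simp
  set s : Set ℝ := {s : ℝ | 0 ≤ s ∧ (s : EReal) < T} with hs_def
  have hconv : Convex ℝ s := by
    rw [convex_iff_ordConnected]
    exact ⟨fun x hx y hy z hz =>
      ⟨hx.1.trans hz.1, lt_of_le_of_lt (by exact_mod_cast hz.2) hy.2⟩⟩
  set F : ℝ → ℝ := fun t => Real.arctan (r * H t) + k * t with hF_def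
  set F' : ℝ → ℝ := fun t => 1 / (1 + (r * H t) ^ 2) * (r * H' t) + k * 1 with hF'_def
  have hFderiv : ∀ t ∈ s, HasDerivWithinAt F (F' t) s t := by
    intro t ht
    exact (((hderiv t ht.1 ht.2).const_mul r).arctan).add
      ((hasDerivWithinAt_id t s).const_mul k)
  have hFd_le : ∀ t : ℝ, t ∈ s → F' t ≤ 0 := by
    intro t ht
    have hH := hineq t ht.1 ht.2
    have hD : 0 < 1 + (r * H t) ^ 2 := by positivity
    have hm : r * H' t ≤ r * (-α * H t ^ 2 - β) :=
      mul_le_mul_of_nonneg_left hH hr.le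
    have heq2 : k * (r * H t) ^ 2 = r * α * H t ^ 2 := by
      rw [← hrβ, ← hr2]; ring
    have key : r * H' t + k * (1 + (r * H t) ^ 2) ≤ 0 := by nlinarith
    have : F' t = (r * H' t + k * (1 + (r * H t) ^ 2)) / (1 + (r * H t) ^ 2) := by
      rw [hF'_def]
      field_simp
    rw [this]
    exact div_nonpos_of_nonpos_of_nonneg key hD.le
  have hcont : ContinuousOn F s := fun t ht => (hFderiv t ht).continuousWithinAt
  have hanti : AntitoneOn F s :=
    antitoneOn_of_hasDerivWithinAt_nonpos hconv hcont
      (fun x hx => (hFderiv x (interior_subset hx)).mono interior_subset)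
      (fun x hx => hFd_le x (interior_subset hx))
  -- main claim: T ≤ π / k
  have hc0 : 0 < Real.pi / k := div_pos Real.pi_pos hk
  have hTle : T ≤ ((Real.pi / k : ℝ) : EReal) := by
    by_contra hlt
    push_neg at hlt
    have h0mem : (0 : ℝ) ∈ s := ⟨le_refl 0, by exact_mod_cast hT⟩
    have hcmem : (Real.pi / k : ℝ) ∈ s := ⟨hc0.le, hlt⟩
    have hFle := hanti h0mem hcmem hc0.le
    have hkc : k * (Real.pi / k) = Real.pi := by field_simp
    have h1 := Real.arctan_lt_pi_div_two (r * H 0)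
    have h2 := Real.neg_pi_div_two_lt_arctan (r * H (Real.pi / k))
    simp only [hF_def, mul_zero, add_zero, hkc] at hFle
    linarith
  constructor
  · exact ne_top_of_le_ne_top (EReal.coe_ne_top _) hTle
  · refine hTle.trans ?_
    rw [EReal.coe_le_coe_iff]
    have : 0 ≤ max (H 0) 0 / β := div_nonneg (le_max_right _ _) hβ.le
    linarith
end

section
/- Let N > 0 be a real constant and let 0 < T ≤ ∞. If f : [0,T) → ℝ is differentiable, satisfies f'(t) ≤ -f(t)²/N for all t ∈ [0,T), and f(0) < 0, then T is finite and T ≤ -N/f(0). -/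
/-- Chae–Tadmor Riccati inequality: if `N > 0`, `0 < T ≤ ∞` (as an extended real), and
`f : [0,T) → ℝ` is differentiable with `f'(t) ≤ -f(t)²/N` on `[0,T)` and `f(0) < 0`,
then `T` is finite and `T ≤ -N / f(0)`. -/
theorem chae_tadmor_riccati_blowup
    (N : ℝ) (hN : 0 < N) (T : EReal) (hT : 0 < T)
    (f f' : ℝ → ℝ)
    (hderiv : ∀ t : ℝ, 0 ≤ t → (t : EReal) < T →
        HasDerivWithinAt f (f' t) {s : ℝ | 0 ≤ s ∧ (s : EReal) < T} t)
    (hineq : ∀ t : ℝ, 0 ≤ t → (t : EReal) < T → f' t ≤ -(f t) ^ 2 / N)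
    (hf0 : f 0 < 0) :
    T ≠ ⊤ ∧ T ≤ ((-N / f 0 : ℝ) : EReal) := by
  set D : Set ℝ := {s : ℝ | 0 ≤ s ∧ (s : EReal) < T} with hDdef
  have h0D : (0 : ℝ) ∈ D := ⟨le_refl 0, by simpa using hT⟩
  -- D is convex
  have hconv : Convex ℝ D := by
    rw [convex_iff_ordConnected]
    constructor
    intro x hx y hy z hz
    exact ⟨le_trans hx.1 hz.1, lt_of_le_of_lt (EReal.coe_le_coe_iff.mpr hz.2) hy.2⟩
  -- continuity of f on D
  have hcont : ContinuousOn f D := fun x hx =>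
    (hderiv x hx.1 hx.2).continuousWithinAt
  -- derivative info at interior points
  have hderivInt : ∀ x ∈ interior D, HasDerivWithinAt f (f' x) (interior D) x := by
    intro x hx
    have hxD := interior_subset hx
    exact ((hderiv x hxD.1 hxD.2).mono_of_mem_nhdsWithin
      (mem_nhdsWithin_of_mem_nhds (mem_interior_iff_mem_nhds.mp hx)))
  -- f is antitone on D
  have hanti : AntitoneOn f D := by
    refine antitoneOn_of_hasDerivWithinAt_nonpos hconv hcont hderivInt ?_
    intro x hx
    have hxD := interior_subset hx
    refine le_trans (hineq x hxD.1 hxD.2) ?_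
    exact div_nonpos_of_nonpos_of_nonneg (neg_nonpos_of_nonneg (sq_nonneg _)) hN.le
  -- f is negative on D
  have hfneg : ∀ x ∈ D, f x < 0 := fun x hx =>
    lt_of_le_of_lt (hanti h0D hx hx.1) hf0
  -- consider g t = N / f t - t, monotone on D
  set g : ℝ → ℝ := fun t => N / f t - t with hgdef
  have hg : MonotoneOn g D := by
    refine monotoneOn_of_hasDerivWithinAt_nonneg hconv ?_
      (f' := fun t => -N * f' t / (f t) ^ 2 - 1) ?_ ?_
    · intro x hx
      exact ((continuousWithinAt_const.div (hcont x hx) (hfneg x hx).ne).sub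
        continuousWithinAt_id)
    · intro x hx
      have hxD := interior_subset hx
      have hfx : f x ≠ 0 := (hfneg x hxD).ne
      have h1 : HasDerivWithinAt (fun t => N / f t)
          ((0 * f x - N * f' x) / (f x) ^ 2) (interior D) x :=
        (hasDerivWithinAt_const x _ N).div (hderivInt x hx) hfx
      have h2 : HasDerivWithinAt g
          ((0 * f x - N * f' x) / (f x) ^ 2 - 1) (interior D) x :=
        h1.sub (hasDerivWithinAt_id x _)
      convert h2 using 1
      ring
    · intro x hx
      have hxD := interior_subset hx
      have hfx : f x < 0 := hfneg x hxD
      have hsq : (0:ℝ) < (f x) ^ 2 := by nlinarith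
      have h3 : f' x ≤ -(f x) ^ 2 / N := hineq x hxD.1 hxD.2
      have h4 : N * f' x ≤ -(f x) ^ 2 := (le_div_iff₀' hN).mp h3
      have h5 : (f x) ^ 2 ≤ -N * f' x := by linarith
      have h6 : (1:ℝ) ≤ -N * f' x / (f x) ^ 2 := by
        rw [le_div_iff₀ hsq]; linarith
      linarith
  -- every t in D satisfies t < -N / f 0
  have hbound : ∀ t ∈ D, t < -N / f 0 := by
    intro t ht
    have h1 : g 0 ≤ g t := hg h0D ht ht.1
    have h2 : N / f t < 0 := div_neg_of_pos_of_neg hN (hfneg t ht)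
    have h3 : N / f 0 ≤ N / f t - t := by simpa [hgdef] using h1
    have : t < -(N / f 0) := by linarith
    simpa [neg_div] using this
  constructor
  · intro hTtop
    have : (-N / f 0 : ℝ) ∈ D := ⟨by
        have : (0:ℝ) < -N / f 0 := div_pos_of_neg_of_neg (by linarith) hf0
        linarith, by rw [hTtop]; exact EReal.coe_lt_top _⟩
    exact absurd (hbound _ this) (lt_irrefl _)
  · by_contra hlt
    push_neg at hlt
    have : (-N / f 0 : ℝ) ∈ D := ⟨by
        have : (0:ℝ) < -N / f 0 := div_pos_of_neg_of_neg (by linarith) hf0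
        linarith, hlt⟩
    exact absurd (hbound _ this) (lt_irrefl _)
end
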